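/- For any finite family a₁,…,aₙ of compact operators on an infinite-dimensional separable Hilbert space L, there exist compact operators c, d₁,…,dₙ such that aₖ = c·dₖ for all k and c is injective with dense range (in particular, c is not a divisor of zero in K(L)). -/

import Mathlib

/-!
Put `S = B*B + ∑ₖ aₖaₖ*`, where `B` is an injective compact operator (a diagonal operator with
summable positive weights on a countable Hilbert basis), and `c = S^{1/4}`. Since `aₖaₖ* ≤ S`
and `B*B ≤ S`, we get `‖aₖ* x‖ ≤ ‖S^{1/2} x‖` and `‖B x‖ ≤ ‖S^{1/2} x‖`; hence `S^{1/2}` is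
injective, and by Douglas' lemma `aₖ* = uₖ S^{1/2}`, i.e. `aₖ = c (c uₖ*)`. The roots of the
compact positive `S` are compact because the functional calculus stays in any closed star
subalgebra containing `S`.
-/

open scoped InnerProductSpace
open ContinuousLinearMap InnerProductSpace

section Orthonormal

variable {𝕜 E : Type*} [RCLike 𝕜] [NormedAddCommGroup E] [InnerProductSpace 𝕜 E]

theorem Orthonormal.countable [TopologicalSpace.SeparableSpace E] {ι : Type*} {v : ι → E}
    (hv : Orthonormal 𝕜 v) : Countable ι := by
  refine Pairwise.countable_of_isOpen_disjoint (s := fun i ↦ Metric.ball (v i) (1 / 2))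
    (fun i j hij ↦ Metric.ball_disjoint_ball ?_) (fun _ ↦ Metric.isOpen_ball)
    (fun _ ↦ Metric.nonempty_ball.2 one_half_pos)
  have hsq : dist (v i) (v j) ^ 2 = 2 := by
    rw [dist_eq_norm, @norm_sub_sq 𝕜, hv.1, hv.1, hv.2 hij]
    norm_num
  nlinarith [dist_nonneg (x := v i) (y := v j)]

theorem isCompactOperator_rankOne {F : Type*} [NormedAddCommGroup F] [NormedSpace 𝕜 F]
    (x : F) (y : E) : IsCompactOperator (rankOne 𝕜 x y) :=
  (isCompactOperator_of_locallyCompactSpace_rng (toSpanSingleton 𝕜 x)).comp_clm (innerSL 𝕜 y)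

theorem exists_isCompactOperator_injective [CompleteSpace E] [TopologicalSpace.SeparableSpace E] :
    ∃ B : E →L[𝕜] E, IsCompactOperator B ∧ Function.Injective B := by
  classical
  obtain ⟨w, b, -⟩ := exists_hilbertBasis 𝕜 E
  have : Countable w := b.orthonormal.countable
  obtain ⟨ε, hε, _, hε_sum, -⟩ := NNReal.exists_pos_sum_of_countable one_ne_zero w
  set P : w → E →L[𝕜] E := fun i ↦ ((ε i : ℝ) : 𝕜) • rankOne 𝕜 (b i) (b i)
  have hP : Summable P :=
    .of_norm_bounded (NNReal.summable_coe.2 hε_sum.summable) fun i ↦ by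
      simp [P, norm_smul, b.orthonormal.1 i]
  refine ⟨∑' i, P i, tsum_mem (s := compactOperator (RingHom.id 𝕜) E E)
    isClosed_setOfPred_isCompactOperator fun i ↦ (isCompactOperator_rankOne _ _).smul _, ?_⟩
  rw [injective_iff_map_eq_zero]
  intro x hx
  have hcoord : ∀ j, ⟪b j, x⟫_𝕜 = 0 := by
    intro j
    have hsum := ((innerSL 𝕜 (b j)).comp (apply 𝕜 E x)).hasSum hP.hasSum
    have hterm : ∀ i, ⟪b j, P i x⟫_𝕜 = if i = j then ((ε j : ℝ) : 𝕜) * ⟪b j, x⟫_𝕜 else 0 := by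
      intro i
      split_ifs with h
      · subst h; simp [P, inner_smul_right, inner_self_eq_norm_sq_to_K, b.orthonormal.1 i]
      · simp [P, inner_smul_right, b.orthonormal.2 (Ne.symm h)]
    simp only [comp_apply, apply_apply, innerSL_apply_apply, hterm, hx,
      inner_zero_right] at hsum
    have := hsum.unique (hasSum_ite_eq j _)
    simpa [(hε j).ne'] using this.symm
  have : b.repr x = 0 := by
    ext j
    simp [HilbertBasis.repr_apply_apply, hcoord]
  simpa using this

end Orthonormal

section Hilbert

variable {𝕜 E F : Type*} [RCLike 𝕜] [NormedAddCommGroup E] [InnerProductSpace 𝕜 E]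
  [NormedAddCommGroup F] [InnerProductSpace 𝕜 F] [CompleteSpace E] [CompleteSpace F]

theorem ContinuousLinearMap.denseRange_of_injective_adjoint {T : E →L[𝕜] F}
    (hT : Function.Injective (adjoint T)) : DenseRange T := by
  rw [DenseRange, ← coe_coe, ← LinearMap.coe_range, Submodule.dense_iff_topologicalClosure_eq_top,
    Submodule.topologicalClosure_eq_top_iff, orthogonal_range]
  exact LinearMap.ker_eq_bot.2 hT

theorem ContinuousLinearMap.norm_apply_le_of_star_mul_self_le {a b : E →L[𝕜] E}
    (h : star a * a ≤ star b * b) (x : E) : ‖a x‖ ≤ ‖b x‖ := by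
  have hpos := ((le_def _ _).1 h).re_inner_nonneg_left x
  simp only [sub_apply, mul_apply_eq_comp, inner_sub_left, map_sub, star_eq_adjoint,
    adjoint_inner_left, inner_self_eq_norm_sq, sub_nonneg] at hpos
  exact pow_le_pow_iff_left₀ (norm_nonneg _) (norm_nonneg _) two_ne_zero |>.1 hpos

theorem IsSelfAdjoint.denseRange_of_injective {T : E →L[𝕜] E} (hT : IsSelfAdjoint T)
    (hinj : Function.Injective T) : DenseRange T :=
  denseRange_of_injective_adjoint (by rwa [← star_eq_adjoint, hT.star_eq])

end Hilbert

theorem ContinuousLinearMap.exists_comp_eq_of_norm_le {𝕜 E F G : Type*} [NontriviallyNormedField 𝕜]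
    [NormedAddCommGroup E] [NormedSpace 𝕜 E] [NormedAddCommGroup F] [NormedSpace 𝕜 F]
    [NormedAddCommGroup G] [NormedSpace 𝕜 G] [CompleteSpace G] {T : E →L[𝕜] F} {A : E →L[𝕜] G}
    (hT : DenseRange T) (h : ∀ x, ‖A x‖ ≤ ‖T x‖) : ∃ u : F →L[𝕜] G, u ∘L T = A :=
  ⟨(A : E →ₗ[𝕜] G).extendOfNorm T, ext fun x ↦
    LinearMap.extendOfNorm_eq hT ⟨1, fun x ↦ by simpa using h x⟩ x⟩

section CompactCFC

variable {E : Type*} [NormedAddCommGroup E] [InnerProductSpace ℂ E] [CompleteSpace E]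

variable (E) in
/-- By Schauder's theorem this is the whole ideal of compact operators; asking for a compact
adjoint makes it a closed star subalgebra without proving that theorem. -/
def compactOperatorsWithCompactAdjoint : NonUnitalStarSubalgebra ℂ (E →L[ℂ] E) where
  carrier := {A : E →L[ℂ] E | IsCompactOperator A ∧ IsCompactOperator (star A : E →L[ℂ] E)}
  add_mem' := fun ⟨ha, ha'⟩ ⟨hb, hb'⟩ ↦
    ⟨ha.add hb, by rw [star_add, FunLike.coe_add]; exact ha'.add hb'⟩
  zero_mem' := ⟨isCompactOperator_zero, by rw [star_zero]; exact isCompactOperator_zero⟩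
  mul_mem' := fun {a _} ⟨_, ha'⟩ ⟨hb, _⟩ ↦
    ⟨hb.clm_comp a, by rw [star_mul, mul_def, coe_comp]; exact ha'.clm_comp _⟩
  smul_mem' := fun c _ ⟨ha, ha'⟩ ↦
    ⟨ha.smul c, by rw [star_smul, FunLike.coe_smul]; exact ha'.smul _⟩
  star_mem' := fun ⟨ha, ha'⟩ ↦ ⟨ha', by rwa [star_star]⟩

theorem isClosed_compactOperatorsWithCompactAdjoint :
    IsClosed (compactOperatorsWithCompactAdjoint E : Set (E →L[ℂ] E)) :=
  (isClosed_setOfPred_isCompactOperator (σ₁₂ := RingHom.id ℂ) (M₁ := E) (M₂ := E)).inter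
    (isClosed_setOfPred_isCompactOperator.preimage continuous_star)

theorem IsCompactOperator.cfcₙ {S : E →L[ℂ] E} (hS : IsCompactOperator S)
    (hSa : IsSelfAdjoint S) (f : ℝ → ℝ) : IsCompactOperator (cfcₙ f S : E →L[ℂ] E) :=
  (cfcₙ_mem (s := compactOperatorsWithCompactAdjoint E)
    (hs := isClosed_compactOperatorsWithCompactAdjoint) f ⟨hS, by rwa [hSa.star_eq]⟩).1

theorem IsCompactOperator.sqrt {S : E →L[ℂ] E} (hS : IsCompactOperator S) (hS0 : 0 ≤ S) :
    IsCompactOperator (CFC.sqrt S : E →L[ℂ] E) := by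
  rw [CFC.sqrt_eq_real_sqrt S hS0]
  exact hS.cfcₙ (IsSelfAdjoint.of_nonneg hS0) _

theorem injective_sqrt_of_star_mul_self_le {S B : E →L[ℂ] E} (hS : 0 ≤ S)
    (hB : Function.Injective B) (h : star B * B ≤ S) : Function.Injective ⇑(CFC.sqrt S) := by
  have hT_sq : star (CFC.sqrt S) * CFC.sqrt S = S := by
    rw [(IsSelfAdjoint.of_nonneg (CFC.sqrt_nonneg S)).star_eq, CFC.sqrt_mul_sqrt_self S hS]
  have hB_le := norm_apply_le_of_star_mul_self_le (hT_sq ▸ h)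
  refine (injective_iff_map_eq_zero _).2 fun x hx ↦ (injective_iff_map_eq_zero B).1 hB x ?_
  simpa [hx] using hB_le x

theorem injective_sqrt {S : E →L[ℂ] E} (hS : 0 ≤ S) (hinj : Function.Injective S) :
    Function.Injective ⇑(CFC.sqrt S) := by
  refine Function.Injective.of_comp (f := ⇑(CFC.sqrt S)) ?_
  rwa [← coe_comp, ← mul_def, CFC.sqrt_mul_sqrt_self S hS]

theorem exists_eq_sqrt_mul_of_mul_star_le {S a : E →L[ℂ] E} (hS : 0 ≤ S)
    (hinj : Function.Injective ⇑(CFC.sqrt S)) (h : a * star a ≤ S) :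
    ∃ v : E →L[ℂ] E, a = CFC.sqrt S * v := by
  have hT_sa := IsSelfAdjoint.of_nonneg (CFC.sqrt_nonneg S)
  obtain ⟨u, hu⟩ := exists_comp_eq_of_norm_le (hT_sa.denseRange_of_injective hinj)
    (norm_apply_le_of_star_mul_self_le (a := star a) (b := CFC.sqrt S)
      (by rwa [star_star, hT_sa.star_eq, CFC.sqrt_mul_sqrt_self S hS]))
  exact ⟨star u, by rw [← hT_sa.star_eq, ← star_mul, mul_def, hu, star_star]⟩

end CompactCFC

open ContinuousLinearMap in
theorem exists_common_left_factor_general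
    {L : Type*} [NormedAddCommGroup L] [InnerProductSpace ℂ L] [CompleteSpace L]
    [TopologicalSpace.SeparableSpace L]
    {n : ℕ} (a : Fin n → (L →L[ℂ] L)) (ha : ∀ k, IsCompactOperator (a k)) :
    ∃ (c : L →L[ℂ] L) (d : Fin n → (L →L[ℂ] L)),
      IsCompactOperator c ∧ (∀ k, IsCompactOperator (d k)) ∧
      Function.Injective c ∧ DenseRange c ∧
      ∀ k, a k = c ∘L d k := by
  obtain ⟨B, hB_compact, hB_inj⟩ := exists_isCompactOperator_injective (𝕜 := ℂ) (E := L)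
  set S := star B * B + ∑ k, a k * star (a k)
  have hsum_nonneg : 0 ≤ ∑ k, a k * star (a k) :=
    Finset.sum_nonneg fun k _ ↦ mul_star_self_nonneg (a k)
  have hS_nonneg : 0 ≤ S := add_nonneg (star_mul_self_nonneg B) hsum_nonneg
  have hS_compact : IsCompactOperator S :=
    (hB_compact.clm_comp (star B)).add
      ((compactOperator (RingHom.id ℂ) L L).sum_mem fun k _ ↦ (ha k).comp_clm (star (a k)))
  have hT_nonneg := CFC.sqrt_nonneg S
  have hT_inj := injective_sqrt_of_star_mul_self_le hS_nonneg hB_inj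
    (le_add_of_nonneg_right hsum_nonneg)
  have hfactor (k : Fin n) : ∃ v, a k = CFC.sqrt S * v :=
    exists_eq_sqrt_mul_of_mul_star_le hS_nonneg hT_inj <|
      le_add_of_nonneg_of_le (star_mul_self_nonneg B) <|
        Finset.single_le_sum (f := fun j ↦ a j * star (a j))
          (fun j _ ↦ mul_star_self_nonneg (a j)) (Finset.mem_univ k)
  choose v hv using hfactor
  set c := CFC.sqrt (CFC.sqrt S)
  have hc_compact : IsCompactOperator c := (hS_compact.sqrt hS_nonneg).sqrt hT_nonneg
  have hc_inj : Function.Injective c := injective_sqrt hT_nonneg hT_inj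
  refine ⟨c, fun k ↦ c * v k, hc_compact, fun k ↦ hc_compact.comp_clm _, hc_inj,
    (IsSelfAdjoint.of_nonneg (CFC.sqrt_nonneg _)).denseRange_of_injective hc_inj, fun k ↦ ?_⟩
  rw [hv k, ← mul_def, ← mul_assoc, CFC.sqrt_mul_sqrt_self _ hT_nonneg]

open ContinuousLinearMap in
/-- For any finite family `a₁, …, aₙ` of compact operators on an infinite-dimensional
separable Hilbert space `L` there are compact operators `c, d₁, …, dₙ` with
`aₖ = c dₖ` for all `k` and `c` injective with dense range (so `c` is not a divisor
of zero in `K(L)`). -/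
theorem exists_common_left_factor
    {L : Type*} [NormedAddCommGroup L] [InnerProductSpace ℂ L] [CompleteSpace L]
    [TopologicalSpace.SeparableSpace L] (hL : ¬ FiniteDimensional ℂ L)
    {n : ℕ} (a : Fin n → (L →L[ℂ] L)) (ha : ∀ k, IsCompactOperator (a k)) :
    ∃ (c : L →L[ℂ] L) (d : Fin n → (L →L[ℂ] L)),
      IsCompactOperator c ∧ (∀ k, IsCompactOperator (d k)) ∧
      Function.Injective c ∧ DenseRange c ∧
      ∀ k, a k = c ∘L d k :=
  exists_common_left_factor_general a ha
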